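/- arXiv:2106.11753 — 2 statements merged into one kernel-verified Lean document; each statement's English description precedes it below -/
import Mathlib

section
/- First-order error of the symplectic Euler modified Hamiltonian (harmonic oscillator): there exist constants C > 0 and h₀ > 0 such that for all h with 0 < h < h₀ and all (p,q) ∈ ℝ², the modified Hamiltonian Ĥ_SE(p,q) = (sin h·(p² + q²)/2 + (1 − cos h)·p·q)/(h·cos h) satisfies |Ĥ_SE(p,q) − (p² + q²)/2| ≤ C·h·(p² + q²). -/
/-!
Over the common denominator `h cos h` the error has numerator
`(sin h - h cos h)(p² + q²)/2 + (1 - cos h) p q`, whose trigonometric coefficients are `O(h²)`,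
while `|p q| ≤ (p² + q²)/2` and `h cos h ≥ h/2` for `h < 1`; hence one can take `C = h₀ = 1`.
-/

noncomputable section

/-- The modified Hamiltonian of the symplectic Euler method with step `h` for the
harmonic oscillator. -/
def HSE (h p q : ℝ) : ℝ :=
  (Real.sin h * (p ^ 2 + q ^ 2) / 2 + (1 - Real.cos h) * p * q) / (h * Real.cos h)

open Real

theorem HSE_sub_hamiltonian {h : ℝ} (hc : h * cos h ≠ 0) (p q : ℝ) :
    HSE h p q - (p ^ 2 + q ^ 2) / 2 =
      ((sin h - h * cos h) * (p ^ 2 + q ^ 2) / 2 + (1 - cos h) * p * q) / (h * cos h) := by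
  rw [HSE, eq_div_iff hc, sub_mul, div_mul_cancel₀ _ hc]
  ring

theorem abs_mul_mul_le_mul_add_sq_div_two (b p q : ℝ) :
    |b * p * q| ≤ |b| * ((p ^ 2 + q ^ 2) / 2) := by
  rw [mul_assoc, abs_mul]
  gcongr
  rw [abs_le]
  constructor <;> nlinarith [sq_nonneg (p + q), sq_nonneg (p - q)]

theorem abs_sin_sub_mul_cos_le {h : ℝ} (hh : 0 < h) : |sin h - h * cos h| ≤ h ^ 3 / 2 := by
  have hsin_le := sin_le hh.le
  have hsin_ge := sin_gt_sub_cube hh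
  have hcos_le := cos_le_one h
  have hcos_ge : 1 - h ^ 2 / 2 ≤ cos h := one_sub_sq_div_two_le_cos
  rw [abs_le]
  constructor <;> nlinarith [pow_pos hh 3]

theorem abs_one_sub_cos_le (h : ℝ) : |1 - cos h| ≤ h ^ 2 / 2 := by
  rw [abs_of_nonneg (sub_nonneg.2 (cos_le_one h))]
  linarith [one_sub_sq_div_two_le_cos (x := h)]

theorem half_lt_cos {h : ℝ} (h0 : 0 ≤ h) (h1 : h < 1) : 1 / 2 < cos h := by
  nlinarith [one_sub_sq_div_two_le_cos (x := h)]

/-- first-order error of the symplectic Euler modified Hamiltonian for the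
harmonic oscillator: `|Ĥ_SE(p,q) − (p² + q²)/2| ≤ C·h·(p² + q²)` for all small `h > 0`. -/
theorem stmt13 :
    ∃ C > (0 : ℝ), ∃ h₀ > (0 : ℝ), ∀ h : ℝ, 0 < h → h < h₀ → ∀ p q : ℝ,
      |HSE h p q - (p ^ 2 + q ^ 2) / 2| ≤ C * h * (p ^ 2 + q ^ 2) := by
  refine ⟨1, one_pos, 1, one_pos, fun h hpos hlt p q => ?_⟩
  have hS : 0 ≤ (p ^ 2 + q ^ 2) / 2 := by positivity
  have hden : h / 2 ≤ h * cos h := by nlinarith [half_lt_cos hpos.le hlt]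
  have hden_pos : 0 < h * cos h := (half_pos hpos).trans_le hden
  rw [HSE_sub_hamiltonian hden_pos.ne', abs_div, abs_of_pos hden_pos, div_le_iff₀ hden_pos]
  calc _ ≤ |sin h - h * cos h| * ((p ^ 2 + q ^ 2) / 2) + |1 - cos h| * ((p ^ 2 + q ^ 2) / 2) := by
          rw [mul_div_assoc]
          refine (abs_add_le _ _).trans (add_le_add ?_ (abs_mul_mul_le_mul_add_sq_div_two _ p q))
          rw [abs_mul, abs_of_nonneg hS]
    _ ≤ (h ^ 3 / 2 + h ^ 2 / 2) * ((p ^ 2 + q ^ 2) / 2) := by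
          rw [← add_mul]
          gcongr
          exacts [abs_sin_sub_mul_cos_le hpos, abs_one_sub_cos_le h]
    _ ≤ 1 * h * (p ^ 2 + q ^ 2) * (h / 2) := by nlinarith [mul_nonneg (mul_nonneg hpos.le hpos.le) hS]
    _ ≤ 1 * h * (p ^ 2 + q ^ 2) * (h * cos h) := by gcongr
end
end

section
/- The post-training correction raises the order of the symplectic Euler modified Hamiltonian from one to two (harmonic oscillator instance of the correction formula H = Ĥ − (h/2)·∇_pĤ·∇_qĤ + O(h²)): let Ĥ_SE(p,q) = (sin h·(p² + q²)/2 + (1 − cos h)·p·q)/(h·cos h) and define the corrected Hamiltonian Ĥ_corr(p,q) = Ĥ_SE(p,q) − (h/2)·(∂Ĥ_SE/∂p)(p,q)·(∂Ĥ_SE/∂q)(p,q). Then there exist constants C > 0 and h₀ > 0 such that for all 0 < h < h₀ and all (p,q) ∈ ℝ², |Ĥ_corr(p,q) − (p² + q²)/2| ≤ C·h²·(p² + q²). -/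
/-!
`Ĥ_SE` is a symmetric quadratic form `a (p² + q²)/2 + b p q`, and the correction
`K ↦ K − (h/2) ∂ₚK ∂_qK` maps this two-parameter family into itself:
`(a, b) ↦ (a − h a b, b − h (a² + b²)/2)`. For `a = sin h/(h cos h)`, `b = (1 − cos h)/(h cos h)`,
the identity `sin² + cos² = 1` turns the error coefficients into
`(sin h (2 cos h − 1) − h cos² h)/(h cos² h)` and `−(1 − cos h)²/(h cos² h)`, and the Taylor
bounds `h − h³/6 < sin h < h`, `1 − h²/2 ≤ cos h ≤ 1` make both `O(h²)`.
-/

noncomputable section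

/-- The corrected Hamiltonian `Ĥ_corr = Ĥ_SE − (h/2)·(∂Ĥ_SE/∂p)·(∂Ĥ_SE/∂q)`. -/
def Hcorr (h p q : ℝ) : ℝ :=
  HSE h p q - (h / 2) * deriv (fun P => HSE h P q) p * deriv (fun Q => HSE h p Q) q

open Real

def quadHam (a b p q : ℝ) : ℝ := a * (p ^ 2 + q ^ 2) / 2 + b * p * q

lemma quadHam_comm (a b p q : ℝ) : quadHam a b p q = quadHam a b q p := by
  unfold quadHam; ring

lemma hasDerivAt_quadHam_fst (a b p q : ℝ) :
    HasDerivAt (fun P => quadHam a b P q) (a * p + b * q) p := by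
  have hsq := (((hasDerivAt_pow 2 p).add_const (q ^ 2)).const_mul a).div_const 2
  have hlin := ((hasDerivAt_id p).const_mul b).mul_const q
  exact (hsq.add hlin).congr_deriv (by norm_num; ring)

lemma deriv_quadHam_fst (a b p q : ℝ) :
    deriv (fun P => quadHam a b P q) p = a * p + b * q :=
  (hasDerivAt_quadHam_fst a b p q).deriv

lemma deriv_quadHam_snd (a b p q : ℝ) :
    deriv (fun Q => quadHam a b p Q) q = a * q + b * p := by
  simp_rw [quadHam_comm a b p]
  exact deriv_quadHam_fst a b q p

lemma quadHam_sub_mul_deriv (a b h p q : ℝ) :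
    quadHam a b p q - h / 2 * (a * p + b * q) * (a * q + b * p)
      = quadHam (a - h * a * b) (b - h * (a ^ 2 + b ^ 2) / 2) p q := by
  unfold quadHam; ring

lemma abs_quadHam_le (a b p q : ℝ) :
    |quadHam a b p q| ≤ (|a| + |b|) / 2 * (p ^ 2 + q ^ 2) := by
  have hpq : |p * q| ≤ (p ^ 2 + q ^ 2) / 2 := by
    rw [abs_le]; constructor <;> nlinarith [sq_nonneg (p + q), sq_nonneg (p - q)]
  calc |quadHam a b p q| ≤ |a * (p ^ 2 + q ^ 2) / 2| + |b * (p * q)| := by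
        rw [quadHam, mul_assoc b]; exact abs_add_le _ _
    _ = |a| * ((p ^ 2 + q ^ 2) / 2) + |b| * |p * q| := by
        rw [abs_mul, abs_div, abs_mul, abs_of_nonneg (by positivity : 0 ≤ p ^ 2 + q ^ 2),
          abs_two, mul_div_assoc]
    _ ≤ |a| * ((p ^ 2 + q ^ 2) / 2) + |b| * ((p ^ 2 + q ^ 2) / 2) := by gcongr
    _ = (|a| + |b|) / 2 * (p ^ 2 + q ^ 2) := by ring

lemma HSE_eq_quadHam (h p q : ℝ) :
    HSE h p q = quadHam (sin h / (h * cos h)) ((1 - cos h) / (h * cos h)) p q := by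
  unfold HSE quadHam; ring

lemma Hcorr_eq_quadHam (h p q : ℝ) :
    let a := sin h / (h * cos h)
    let b := (1 - cos h) / (h * cos h)
    Hcorr h p q = quadHam (a - h * a * b) (b - h * (a ^ 2 + b ^ 2) / 2) p q := by
  intro a b
  have hHSE : HSE h = fun p q => quadHam a b p q := by
    funext p q; exact HSE_eq_quadHam h p q
  rw [Hcorr, hHSE, deriv_quadHam_fst, deriv_quadHam_snd, quadHam_sub_mul_deriv]

lemma Hcorr_sub_energy (h p q : ℝ) (hh : h ≠ 0) (hc : cos h ≠ 0) :
    Hcorr h p q - (p ^ 2 + q ^ 2) / 2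
      = quadHam ((sin h * (2 * cos h - 1) - h * cos h ^ 2) / (h * cos h ^ 2))
          (-(1 - cos h) ^ 2 / (h * cos h ^ 2)) p q := by
  have hfst : sin h / (h * cos h) - h * (sin h / (h * cos h)) * ((1 - cos h) / (h * cos h)) - 1
      = (sin h * (2 * cos h - 1) - h * cos h ^ 2) / (h * cos h ^ 2) := by
    field_simp; ring
  have hsnd : (1 - cos h) / (h * cos h)
        - h * ((sin h / (h * cos h)) ^ 2 + ((1 - cos h) / (h * cos h)) ^ 2) / 2
      = -(1 - cos h) ^ 2 / (h * cos h ^ 2) := by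
    field_simp; linear_combination (-1 : ℝ) * sin_sq_add_cos_sq h
  rw [Hcorr_eq_quadHam, ← hfst, ← hsnd]
  unfold quadHam; ring

lemma one_sub_cos_sq_le (h : ℝ) : (1 - cos h) ^ 2 ≤ h ^ 4 / 4 := by
  have hlow := one_sub_sq_div_two_le_cos (x := h)
  have hup := cos_le_one h
  nlinarith

lemma abs_sin_mul_sub_le {h : ℝ} (hpos : 0 < h) (hle : h ≤ 1) :
    |sin h * (2 * cos h - 1) - h * cos h ^ 2| ≤ h ^ 3 / 2 := by
  have hsin : |sin h - h| ≤ h ^ 3 / 6 := by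
    rw [abs_le]; constructor <;> linarith [sin_lt hpos, sin_gt_sub_cube hpos]
  have hcos : |2 * cos h - 1| ≤ 1 := by
    rw [abs_le]; constructor <;> nlinarith [one_sub_sq_div_two_le_cos (x := h), cos_le_one h]
  have hsq : h * (1 - cos h) ^ 2 ≤ h ^ 3 / 4 := by
    nlinarith [one_sub_cos_sq_le h, pow_pos hpos 3]
  calc |sin h * (2 * cos h - 1) - h * cos h ^ 2|
      = |(sin h - h) * (2 * cos h - 1) - h * (1 - cos h) ^ 2| := by congr 1; ring
    _ ≤ |(sin h - h) * (2 * cos h - 1)| + |h * (1 - cos h) ^ 2| := abs_sub _ _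
    _ = |sin h - h| * |2 * cos h - 1| + h * (1 - cos h) ^ 2 := by
        rw [abs_mul, abs_of_nonneg (by positivity : 0 ≤ h * (1 - cos h) ^ 2)]
    _ ≤ h ^ 3 / 6 * 1 + h ^ 3 / 4 := by gcongr
    _ ≤ h ^ 3 / 2 := by nlinarith [pow_pos hpos 3]

lemma abs_Hcorr_sub_energy_le {h : ℝ} (hpos : 0 < h) (hle : h ≤ 1) (p q : ℝ) :
    |Hcorr h p q - (p ^ 2 + q ^ 2) / 2| ≤ 3 / 2 * h ^ 2 * (p ^ 2 + q ^ 2) := by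
  have hcos : 1 / 2 ≤ cos h := by nlinarith [one_sub_sq_div_two_le_cos (x := h)]
  have hden : h / 4 ≤ h * cos h ^ 2 := by
    have : 1 / 4 ≤ cos h ^ 2 := by nlinarith
    nlinarith
  have hden_pos : 0 < h * cos h ^ 2 := by positivity
  have hfst : |(sin h * (2 * cos h - 1) - h * cos h ^ 2) / (h * cos h ^ 2)| ≤ 2 * h ^ 2 := by
    rw [abs_div, abs_of_pos hden_pos, div_le_iff₀ hden_pos]
    nlinarith [abs_sin_mul_sub_le hpos hle]
  have hsnd : |-(1 - cos h) ^ 2 / (h * cos h ^ 2)| ≤ h ^ 2 := by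
    rw [abs_div, abs_neg, abs_of_nonneg (sq_nonneg _), abs_of_pos hden_pos,
      div_le_iff₀ hden_pos]
    nlinarith [one_sub_cos_sq_le h, pow_pos hpos 3]
  rw [Hcorr_sub_energy h p q hpos.ne' (by linarith)]
  calc _ ≤ _ := abs_quadHam_le _ _ p q
    _ ≤ (2 * h ^ 2 + h ^ 2) / 2 * (p ^ 2 + q ^ 2) := by gcongr
    _ = 3 / 2 * h ^ 2 * (p ^ 2 + q ^ 2) := by ring

/-- the post-training correction raises the order of the symplectic Euler
modified Hamiltonian from one to two (harmonic oscillator):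
`|Ĥ_corr(p,q) − (p² + q²)/2| ≤ C·h²·(p² + q²)` for all small `h > 0`. -/
theorem stmt15 :
    ∃ C > (0 : ℝ), ∃ h₀ > (0 : ℝ), ∀ h : ℝ, 0 < h → h < h₀ → ∀ p q : ℝ,
      |Hcorr h p q - (p ^ 2 + q ^ 2) / 2| ≤ C * h ^ 2 * (p ^ 2 + q ^ 2) :=
  ⟨3 / 2, by norm_num, 1, one_pos, fun _ hpos hlt p q => abs_Hcorr_sub_energy_le hpos hlt.le p q⟩
end
end
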